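/- For k ≥ 2 and positive integers a, b, c, the blown-up Mycielskian graph M_k(a,b,c) has chromatic number exactly k + 1. -/
import Mathlib

open SimpleGraph

def Myc (k a b c : ℕ) : SimpleGraph ((Fin k × Fin a) ⊕ (Fin k × Fin b) ⊕ Fin c) :=
  SimpleGraph.fromRel (fun x y =>
    match x, y with
    | Sum.inl v, Sum.inl w => v.1 ≠ w.1
    | Sum.inl v, Sum.inr (Sum.inl w) => v.1 ≠ w.1
    | Sum.inr (Sum.inl _), Sum.inr (Sum.inr _) => True
    | _, _ => False)

theorem stmt6 (k a b c : ℕ) (hk : 2 ≤ k) (ha : 1 ≤ a) (hb : 1 ≤ b) (hc : 1 ≤ c) :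
    (Myc k a b c).chromaticNumber = (k + 1 : ℕ) := by
  have hcol : (Myc k a b c).Colorable (k + 1) := by
    refine ⟨⟨fun x => match x with
      | Sum.inl v => v.1.castSucc
      | Sum.inr (Sum.inl w) => w.1.castSucc
      | Sum.inr (Sum.inr _) => Fin.last k, ?_⟩⟩
    intro x y hxy
    rw [Myc, fromRel_adj] at hxy
    obtain ⟨hne, h⟩ := hxy
    rcases x with v | w | u <;> rcases y with v' | w' | u' <;>
      simp_all [Fin.ext_iff] <;> omega
  have hnot : ¬ (Myc k a b c).Colorable k := by
    rintro ⟨C⟩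
    set f : Fin k → Fin k := fun i => C (Sum.inl (i, ⟨0, ha⟩)) with hf
    have hinj : Function.Injective f := by
      intro i j hij
      by_contra hij'
      have hadj : (Myc k a b c).Adj (Sum.inl (i, ⟨0, ha⟩)) (Sum.inl (j, ⟨0, ha⟩)) := by
        rw [Myc, fromRel_adj]
        exact ⟨by simp [hij'], Or.inl hij'⟩
      exact C.valid hadj hij
    have hsurj : Function.Surjective f := Finite.surjective_of_injective hinj
    have hW : ∀ i : Fin k, C (Sum.inr (Sum.inl (i, ⟨0, hb⟩))) = f i := by
      intro i
      obtain ⟨j, hj⟩ := hsurj (C (Sum.inr (Sum.inl (i, ⟨0, hb⟩))))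
      rcases eq_or_ne j i with rfl | hji
      · exact hj.symm
      · exfalso
        have hadj : (Myc k a b c).Adj (Sum.inl (j, ⟨0, ha⟩)) (Sum.inr (Sum.inl (i, ⟨0, hb⟩))) := by
          rw [Myc, fromRel_adj]
          exact ⟨by simp, Or.inl hji⟩
        exact C.valid hadj hj
    obtain ⟨i, hi⟩ := hsurj (C (Sum.inr (Sum.inr ⟨0, hc⟩)))
    have hadj : (Myc k a b c).Adj (Sum.inr (Sum.inl (i, ⟨0, hb⟩))) (Sum.inr (Sum.inr ⟨0, hc⟩)) := by
      rw [Myc, fromRel_adj]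
      exact ⟨by simp, Or.inl trivial⟩
    exact C.valid hadj ((hW i).trans hi)
  refine le_antisymm hcol.chromaticNumber_le ?_
  have hk' : (k : ℕ∞) < (Myc k a b c).chromaticNumber := by
    by_contra h
    exact hnot (chromaticNumber_le_iff_colorable.mp (not_lt.mp h))
  have := Order.add_one_le_of_lt hk'
  push_cast
  exact this
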